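/- arXiv:2411.03834 — 2 statements merged into one kernel-verified Lean document; each statement's English description precedes it below -/
import Mathlib

section
/- Consider the dual-mode controlled system x(k+1) = g(x(k)) where g(x) = f_κ(x) if x ∈ S₀ and g(x) = f_Φ(x) if x ∉ S₀, for two maps f_κ, f_Φ : ℝⁿ → ℝⁿ. Assume: (1) S₀ is positively invariant under f_κ (f_κ '' S₀ ⊆ S₀) and every trajectory of x(k+1)=f_κ(x(k)) starting in S₀ converges to 0; (2) F_max is positively invariant under f_Φ and there exists k* such that f_Φ^[k*] '' F_max ⊆ S₀, with S₀ ⊆ F_max. Then for every x(0) ∈ F_max, the trajectory of the dual-mode system converges to 0, i.e., x(k) → 0 as k → ∞. -/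
open Filter

/-- Asymptotic stability of the dual-mode controlled system: trajectories starting
in `F_max` converge to the origin. -/
theorem stmt_9 {n : ℕ} (fκ fΦ g : (Fin n → ℝ) → (Fin n → ℝ))
    (S0 Fmax : Set (Fin n → ℝ))
    (hg : ∀ x, (x ∈ S0 → g x = fκ x) ∧ (x ∉ S0 → g x = fΦ x))
    (hS0inv : fκ '' S0 ⊆ S0)
    (hS0conv : ∀ x ∈ S0, Tendsto (fun k => fκ^[k] x) atTop (nhds 0))
    (hFmaxInv : fΦ '' Fmax ⊆ Fmax)
    (kstar : ℕ) (hreach : fΦ^[kstar] '' Fmax ⊆ S0)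
    (hS0sub : S0 ⊆ Fmax) :
    ∀ x0 ∈ Fmax, Tendsto (fun k => g^[k] x0) atTop (nhds 0) := by
  intro x0 hx0
  -- Before entering S0, g agrees with fΦ and stays in Fmax
  have lemA : ∀ k, (∀ j < k, g^[j] x0 ∉ S0) →
      g^[k] x0 = fΦ^[k] x0 ∧ g^[k] x0 ∈ Fmax := by
    intro k
    induction k with
    | zero => intro _; exact ⟨rfl, hx0⟩
    | succ k ih =>
      intro h
      obtain ⟨heq, hmem⟩ := ih fun j hj => h j (Nat.lt_succ_of_lt hj)
      have hnot : g^[k] x0 ∉ S0 := h k (Nat.lt_succ_self k)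
      have h1 : g^[k+1] x0 = fΦ^[k+1] x0 := by
        rw [Function.iterate_succ_apply', Function.iterate_succ_apply',
          (hg _).2 hnot, heq]
      refine ⟨h1, ?_⟩
      rw [h1, Function.iterate_succ_apply', ← heq]
      exact hFmaxInv ⟨_, hmem, rfl⟩
  -- The trajectory enters S0
  have hexists : ∃ k, g^[k] x0 ∈ S0 := by
    by_contra h
    push_neg at h
    obtain ⟨heq, _⟩ := lemA kstar fun j _ => h j
    exact h kstar (heq ▸ hreach ⟨x0, hx0, rfl⟩)
  obtain ⟨m, hm⟩ := hexists
  set y := g^[m] x0 with hy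
  -- After entering S0, g agrees with fκ
  have lemB : ∀ j, g^[m + j] x0 = fκ^[j] y ∧ fκ^[j] y ∈ S0 := by
    intro j
    induction j with
    | zero => exact ⟨rfl, hm⟩
    | succ j ih =>
      obtain ⟨heq, hmem⟩ := ih
      constructor
      · rw [← Nat.add_assoc, Function.iterate_succ_apply',
          Function.iterate_succ_apply', heq, (hg _).1 hmem]
      · rw [Function.iterate_succ_apply']
        exact hS0inv ⟨_, hmem, rfl⟩
  have hconv : Tendsto (fun k => fκ^[k - m] y) atTop (nhds 0) :=
    (hS0conv y hm).comp (tendsto_sub_atTop_nat m)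
  refine hconv.congr' ?_
  filter_upwards [eventually_ge_atTop m] with k hk
  have : m + (k - m) = k := Nat.add_sub_cancel' hk
  rw [← (lemB (k - m)).1, this]
end

section
/- Finite termination of the invariant-set algorithm: let R̄₁ be a monotone set operator over-approximating images under f (f '' S ⊆ R̄₁(S), and A ⊆ B ⟹ R̄₁(A) ⊆ R̄₁(B)), let X be a set, and define the algorithm iterates F₀ := X, F_{k+1} := R̄₁(F_k) ∩ X. Suppose there exists k̄ ∈ ℕ such that the iterates of R̄₁ alone satisfy R̄^{k̄+1}(X) ⊆ R̄^{k̄}(X) ⊆ X (where R̄^k(X) is the k-fold application of R̄₁ to X). Then F_{k̄} satisfies R̄₁(F_{k̄}) ⊆ F_{k̄} ⊆ X; in particular F_{k̄} is positively invariant for x(k+1)=f(x(k)) and contained in X. -/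
/-- Finite termination of the invariant-set algorithm: under the stated
contraction of the pure iterates at step `k̄`, the algorithm iterate `F_{k̄}`
satisfies `R̄₁(F_{k̄}) ⊆ F_{k̄} ⊆ X` and is positively invariant. -/
theorem stmt_16 {n : ℕ} (f : (Fin n → ℝ) → (Fin n → ℝ))
    (Rbar1 : Set (Fin n → ℝ) → Set (Fin n → ℝ))
    (hmono : ∀ A B : Set (Fin n → ℝ), A ⊆ B → Rbar1 A ⊆ Rbar1 B)
    (hover : ∀ S, f '' S ⊆ Rbar1 S)
    (X : Set (Fin n → ℝ))
    (F : ℕ → Set (Fin n → ℝ))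
    (hF0 : F 0 = X) (hFsucc : ∀ k, F (k + 1) = Rbar1 (F k) ∩ X)
    (kbar : ℕ)
    (hiter : Rbar1^[kbar + 1] X ⊆ Rbar1^[kbar] X ∧ Rbar1^[kbar] X ⊆ X) :
    Rbar1 (F kbar) ⊆ F kbar ∧ F kbar ⊆ X ∧ f '' F kbar ⊆ F kbar := by
  have hsubX : ∀ k, F k ⊆ X := by
    intro k
    cases k with
    | zero => rw [hF0]
    | succ k => rw [hFsucc]; exact Set.inter_subset_right
  have hdec : ∀ k, F (k + 1) ⊆ F k := by
    intro k
    induction k with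
    | zero => rw [hFsucc, hF0]; exact Set.inter_subset_right
    | succ k ih =>
      rw [hFsucc (k+1)]
      exact (Set.inter_subset_inter_left X (hmono _ _ ih)).trans (hFsucc k).superset
  have hiterk : ∀ k, F k ⊆ Rbar1^[k] X := by
    intro k
    induction k with
    | zero => rw [hF0]; simp
    | succ k ih =>
      rw [hFsucc, Function.iterate_succ_apply']
      exact Set.inter_subset_left.trans (hmono _ _ ih)
  have h1 : Rbar1 (F kbar) ⊆ X := by
    have h := hmono _ _ (hiterk kbar)
    rw [← Function.iterate_succ_apply' Rbar1 kbar X] at h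
    exact h.trans (hiter.1.trans hiter.2)
  have h2 : Rbar1 (F kbar) ⊆ F kbar := by
    have : Rbar1 (F kbar) ⊆ F (kbar + 1) := by
      rw [hFsucc]; exact Set.subset_inter (subset_refl _) h1
    exact this.trans (hdec kbar)
  exact ⟨h2, hsubX kbar, (hover _).trans h2⟩
end
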